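/- arXiv:1003.4388 — 2 statements merged into one kernel-verified Lean document; each statement's English description precedes it below -/
import Mathlib

section
/- For the Spin(7) 4-form Θ on ℝ⁸: Θ_{ijkl} Θ_{abcd} δ^{kc} δ^{ld} = 6 δ_{ia} δ_{jb} - 6 δ_{ib} δ_{ja} - 4 Θ_{ijab} for all i,j,a,b ∈ {1,...,8}. -/
open scoped BigOperators

noncomputable def kd {n : ℕ} (i j : Fin n) : ℝ := if i = j then 1 else 0

noncomputable def w3 {n : ℕ} (a b c i j k : Fin n) : ℝ :=
  Matrix.det !![kd a i, kd a j, kd a k; kd b i, kd b j, kd b k; kd c i, kd c j, kd c k]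

noncomputable def w4 {n : ℕ} (a b c d i j k l : Fin n) : ℝ :=
  Matrix.det !![kd a i, kd a j, kd a k, kd a l; kd b i, kd b j, kd b k, kd b l;
                kd c i, kd c j, kd c k, kd c l; kd d i, kd d j, kd d k, kd d l]

/-- Components of the standard G₂ 3-form Π on ℝ⁷ (0-indexed coordinates). -/
noncomputable def Pi7 (i j k : Fin 7) : ℝ :=
  w3 0 1 4 i j k + w3 0 2 5 i j k + w3 0 3 6 i j k - w3 1 2 6 i j k
    + w3 1 3 5 i j k - w3 2 3 4 i j k + w3 4 5 6 i j k

/-- Components of the standard G₂ 4-form Ψ = *Π on ℝ⁷. -/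
noncomputable def Psi7 (i j k l : Fin 7) : ℝ :=
  w4 0 1 2 3 i j k l - w4 0 1 5 6 i j k l + w4 0 2 4 6 i j k l - w4 0 3 4 5 i j k l
    + w4 1 2 4 5 i j k l + w4 1 3 4 6 i j k l + w4 2 3 5 6 i j k l

/-- Components of the Spin(7) 4-form Θ = Π ∧ dx⁸ + Ψ on ℝ⁸ (0-indexed). -/
noncomputable def Theta8 (i j k l : Fin 8) : ℝ :=
  (w4 0 1 4 7 i j k l + w4 0 2 5 7 i j k l + w4 0 3 6 7 i j k l - w4 1 2 6 7 i j k l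
    + w4 1 3 5 7 i j k l - w4 2 3 4 7 i j k l + w4 4 5 6 7 i j k l)
  + (w4 0 1 2 3 i j k l - w4 0 1 5 6 i j k l + w4 0 2 4 6 i j k l - w4 0 3 4 5 i j k l
    + w4 1 2 4 5 i j k l + w4 1 3 4 6 i j k l + w4 2 3 5 6 i j k l)

/-
Both sides are antisymmetric in `(i, j)` and in `(a, b)`, so only the 28 × 28 cases `i < j`,
`a < b` need checking. Every elementary form `w4` is a Laplace expansion in Kronecker deltas, so
`Θ` has integer components, and those cases are settled by evaluating an integer model of `Θ`.
-/

open Finset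

lemma sum_sum_mul_kd_mul_kd {n : ℕ} (g : Fin n → Fin n → ℝ) (k l : Fin n) :
    ∑ c, ∑ d, g c d * kd k c * kd l d = g k l := by
  simp [kd]

lemma eq_zero_of_antisymm {ι R : Type*} [LinearOrder ι] [Ring R] [NoZeroDivisors R] [CharZero R]
    {f : ι → ι → R} (hf : ∀ i j, f j i = -f i j) (hlt : ∀ i j, i < j → f i j = 0) (i j : ι) :
    f i j = 0 := by
  rcases lt_trichotomy i j with h | rfl | h
  · exact hlt i j h
  · exact CharZero.eq_neg_self_iff.mp (hf i i)
  · rw [hf, hlt j i h, neg_zero]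

lemma sum_fin_sum_fin_eq_sum_range {M : Type*} [AddCommMonoid M] (n : ℕ) (f : ℕ → ℕ → M) :
    ∑ k : Fin n, ∑ l : Fin n, f k l = ∑ k ∈ range n, ∑ l ∈ range n, f k l := by
  simp only [Fin.sum_univ_eq_sum_range (f _),
    Fin.sum_univ_eq_sum_range (fun k => ∑ l ∈ range n, f k l)]

-- Indices live in `ℕ` rather than `Fin n`: the kernel evaluates `ℕ` numerals far faster.
def kdN (i j : ℕ) : ℤ := if i = j then 1 else 0

def w2N (a b i j : ℕ) : ℤ := kdN a i * kdN b j - kdN a j * kdN b i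

def w3N (a b c i j k : ℕ) : ℤ :=
  kdN a i * w2N b c j k - kdN a j * w2N b c i k + kdN a k * w2N b c i j

def w4N (a b c d i j k l : ℕ) : ℤ :=
  kdN a i * w3N b c d j k l - kdN a j * w3N b c d i k l + kdN a k * w3N b c d i j l
    - kdN a l * w3N b c d i j k

def thetaN (i j k l : ℕ) : ℤ :=
  (w4N 0 1 4 7 i j k l + w4N 0 2 5 7 i j k l + w4N 0 3 6 7 i j k l - w4N 1 2 6 7 i j k l
    + w4N 1 3 5 7 i j k l - w4N 2 3 4 7 i j k l + w4N 4 5 6 7 i j k l)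
  + (w4N 0 1 2 3 i j k l - w4N 0 1 5 6 i j k l + w4N 0 2 4 6 i j k l - w4N 0 3 4 5 i j k l
    + w4N 1 2 4 5 i j k l + w4N 1 3 4 6 i j k l + w4N 2 3 5 6 i j k l)

lemma kd_eq_kdN {n : ℕ} (i j : Fin n) : kd i j = kdN i j := by
  simp [kd, kdN, Fin.val_inj, apply_ite (Int.cast : ℤ → ℝ)]

lemma w4_eq_w4N {n : ℕ} (a b c d i j k l : Fin n) :
    w4 a b c d i j k l = w4N a b c d i j k l := by
  simp [w4, w4N, w3N, w2N, Matrix.det_succ_row_zero, Fin.sum_univ_succ, kd_eq_kdN, Fin.succAbove]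
  ring

lemma Theta8_eq_thetaN (i j k l : Fin 8) : Theta8 i j k l = thetaN i j k l := by
  simp [Theta8, thetaN, w4_eq_w4N]

lemma w4N_swap_left (a b c d i j k l : ℕ) : w4N a b c d j i k l = -w4N a b c d i j k l := by
  simp only [w4N, w3N, w2N]; ring

lemma w4N_swap_right (a b c d i j k l : ℕ) : w4N a b c d i j l k = -w4N a b c d i j k l := by
  simp only [w4N, w3N, w2N]; ring

lemma Theta8_swap_left (i j k l : Fin 8) : Theta8 j i k l = -Theta8 i j k l := by
  simp only [Theta8_eq_thetaN, thetaN, w4N_swap_left (i := i) (j := j)]; push_cast; ring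

lemma Theta8_swap_right (i j k l : Fin 8) : Theta8 i j l k = -Theta8 i j k l := by
  simp only [Theta8_eq_thetaN, thetaN, w4N_swap_right (k := k) (l := l)]; push_cast; ring

lemma thetaN_contraction : ∀ j < 8, ∀ i < j, ∀ b < 8, ∀ a < b,
    ∑ k ∈ range 8, ∑ l ∈ range 8, thetaN i j k l * thetaN a b k l
      = 6 * kdN i a * kdN j b - 6 * kdN i b * kdN j a - 4 * thetaN i j a b := by
  decide +kernel

lemma Theta8_contraction_of_lt {i j a b : Fin 8} (hij : i < j) (hab : a < b) :
    ∑ k, ∑ l, Theta8 i j k l * Theta8 a b k l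
      = 6 * kd i a * kd j b - 6 * kd i b * kd j a - 4 * Theta8 i j a b := by
  have h := thetaN_contraction j j.isLt i hij b b.isLt a hab
  simp only [Theta8_eq_thetaN, kd_eq_kdN]
  rw [sum_fin_sum_fin_eq_sum_range 8 fun k l => (thetaN i j k l : ℝ) * thetaN a b k l]
  exact_mod_cast h

lemma Theta8_contraction (i j a b : Fin 8) :
    ∑ k, ∑ l, Theta8 i j k l * Theta8 a b k l
      = 6 * kd i a * kd j b - 6 * kd i b * kd j a - 4 * Theta8 i j a b := by
  let D : Fin 8 → Fin 8 → Fin 8 → Fin 8 → ℝ := fun i j a b =>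
    (∑ k, ∑ l, Theta8 i j k l * Theta8 a b k l)
      - (6 * kd i a * kd j b - 6 * kd i b * kd j a - 4 * Theta8 i j a b)
  have hleft (i j a b : Fin 8) : D j i a b = -D i j a b := by
    simp only [D, Theta8_swap_left i j, neg_mul, sum_neg_distrib]; ring
  have hright (i j a b : Fin 8) : D i j b a = -D i j a b := by
    simp only [D, Theta8_swap_left a b, Theta8_swap_right i j a b, mul_neg, sum_neg_distrib]; ring
  have hlt (i j : Fin 8) (hij : i < j) : D i j a b = 0 :=
    eq_zero_of_antisymm (hright i j)
      (fun a b hab => sub_eq_zero.mpr (Theta8_contraction_of_lt hij hab)) a b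
  exact sub_eq_zero.mp (eq_zero_of_antisymm (f := fun i j => D i j a b) (hleft · · a b) hlt i j)

theorem stmt15 (i j a b : Fin 8) :
    ∑ k : Fin 8, ∑ l : Fin 8, ∑ c : Fin 8, ∑ d : Fin 8,
      Theta8 i j k l * Theta8 a b c d * kd k c * kd l d
        = 6 * kd i a * kd j b - 6 * kd i b * kd j a - 4 * Theta8 i j a b := by
  simp only [sum_sum_mul_kd_mul_kd]
  exact Theta8_contraction i j a b
end

section
/- For the standard G₂ structure on ℝ⁷, the identity Ψ_{ijkl} Ψ_{abcd} δ^{ld} = -Π_{ajk} Π_{ibc} - Π_{iak} Π_{jbc} - Π_{ija} Π_{kbc} + δ_{ia} δ_{jb} δ_{kc} + δ_{ib} δ_{jc} δ_{ka} + δ_{ic} δ_{ja} δ_{kb} - δ_{ia} δ_{jc} δ_{kb} - δ_{ib} δ_{ja} δ_{kc} - δ_{ic} δ_{jb} δ_{ka} - δ_{ia} Ψ_{jkbc} - δ_{ja} Ψ_{kibc} - δ_{ka} Ψ_{ijbc} + δ_{ab} Ψ_{ijkc} - δ_{ac} Ψ_{ijkb} holds for all i,j,k,a,b,c ∈ {1,...,7}.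 -/
open scoped BigOperators

/-!
Both sides are integer-valued and alternating in `(i, j, k)` and in `(b, c)`, so it suffices to
check the `35 · 7 · 21` index choices with `i < j < k` and `b < c`, which the kernel evaluates.
-/

section Alternating

variable {α G : Type*} [LinearOrder α] [AddGroup G] [IsAddTorsionFree G]

theorem eq_zero_of_antisymm_of_forall_lt {f : α → α → G} (hf : ∀ x y, f y x = -f x y)
    (h : ∀ x y, x < y → f x y = 0) (x y : α) : f x y = 0 := by
  rcases lt_trichotomy x y with hxy | rfl | hxy
  · exact h x y hxy
  · exact self_eq_neg.mp (hf x x)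
  · rw [hf y x, h y x hxy, neg_zero]

theorem eq_zero_of_antisymm₃_of_forall_lt {f : α → α → α → G}
    (hf₁₂ : ∀ x y z, f y x z = -f x y z) (hf₂₃ : ∀ x y z, f x z y = -f x y z)
    (h : ∀ x y z, x < y → y < z → f x y z = 0) (x y z : α) : f x y z = 0 := by
  have hsorted₂₃ : ∀ u v w, v < w → f u v w = 0 := by
    intro u v w hvw
    rcases lt_trichotomy u v with huv | rfl | hvu
    · exact h u v w huv hvw
    · exact self_eq_neg.mp (hf₁₂ u u w)
    · rw [hf₁₂ v u w, neg_eq_zero]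
      rcases lt_trichotomy u w with huw | rfl | hwu
      · exact h v u w hvu huw
      · exact self_eq_neg.mp (hf₂₃ v u u)
      · rw [hf₂₃ v w u, h v w u hvw hwu, neg_zero]
  exact eq_zero_of_antisymm_of_forall_lt (f := f x) (hf₂₃ x) (hsorted₂₃ x) y z

end Alternating

-- Integer copies of `kd`, `w3`, `w4`, `Pi7`, `Psi7`, with the determinants expanded so that the
-- kernel can evaluate them.

def kdZ {n : ℕ} (i j : Fin n) : ℤ := if i = j then 1 else 0

def w3Z {n : ℕ} (a b c i j k : Fin n) : ℤ :=
  kdZ a i * kdZ b j * kdZ c k - kdZ a i * kdZ b k * kdZ c j - kdZ a j * kdZ b i * kdZ c k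
    + kdZ a j * kdZ b k * kdZ c i + kdZ a k * kdZ b i * kdZ c j - kdZ a k * kdZ b j * kdZ c i

def w4Z {n : ℕ} (a b c d i j k l : Fin n) : ℤ :=
  kdZ a i * w3Z b c d j k l - kdZ a j * w3Z b c d i k l + kdZ a k * w3Z b c d i j l
    - kdZ a l * w3Z b c d i j k

def Pi7Z (i j k : Fin 7) : ℤ :=
  w3Z 0 1 4 i j k + w3Z 0 2 5 i j k + w3Z 0 3 6 i j k - w3Z 1 2 6 i j k
    + w3Z 1 3 5 i j k - w3Z 2 3 4 i j k + w3Z 4 5 6 i j k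

def Psi7Z (i j k l : Fin 7) : ℤ :=
  w4Z 0 1 2 3 i j k l - w4Z 0 1 5 6 i j k l + w4Z 0 2 4 6 i j k l - w4Z 0 3 4 5 i j k l
    + w4Z 1 2 4 5 i j k l + w4Z 1 3 4 6 i j k l + w4Z 2 3 5 6 i j k l

theorem kd_eq_intCast {n : ℕ} (i j : Fin n) : kd i j = kdZ i j := by
  unfold kd kdZ
  split_ifs <;> simp

theorem w3_eq_intCast {n : ℕ} (a b c i j k : Fin n) : w3 a b c i j k = w3Z a b c i j k := by
  simp [w3, w3Z, Matrix.det_fin_three, kd_eq_intCast]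

theorem w4_eq_laplace {n : ℕ} (a b c d i j k l : Fin n) :
    w4 a b c d i j k l = kd a i * w3 b c d j k l - kd a j * w3 b c d i k l
      + kd a k * w3 b c d i j l - kd a l * w3 b c d i j k := by
  rw [w4, Matrix.det_succ_row_zero, Fin.sum_univ_four]
  norm_num [w3, sub_eq_add_neg]
  rfl

theorem w4_eq_intCast {n : ℕ} (a b c d i j k l : Fin n) :
    w4 a b c d i j k l = w4Z a b c d i j k l := by
  simp [w4_eq_laplace, w4Z, w3_eq_intCast, kd_eq_intCast]

theorem Pi7_eq_intCast (i j k : Fin 7) : Pi7 i j k = Pi7Z i j k := by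
  simp only [Pi7, Pi7Z, w3_eq_intCast]
  push_cast
  ring

theorem Psi7_eq_intCast (i j k l : Fin 7) : Psi7 i j k l = Psi7Z i j k l := by
  simp only [Psi7, Psi7Z, w4_eq_intCast]
  push_cast
  ring

theorem Pi7Z_swap₁₂ (i j k : Fin 7) : Pi7Z j i k = -Pi7Z i j k := by
  simp only [Pi7Z, w3Z]
  ring

theorem Pi7Z_swap₂₃ (i j k : Fin 7) : Pi7Z i k j = -Pi7Z i j k := by
  simp only [Pi7Z, w3Z]
  ring

theorem Psi7Z_swap₁₂ (i j k l : Fin 7) : Psi7Z j i k l = -Psi7Z i j k l := by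
  simp only [Psi7Z, w4Z, w3Z]
  ring

theorem Psi7Z_swap₂₃ (i j k l : Fin 7) : Psi7Z i k j l = -Psi7Z i j k l := by
  simp only [Psi7Z, w4Z, w3Z]
  ring

theorem Psi7Z_swap₃₄ (i j k l : Fin 7) : Psi7Z i j l k = -Psi7Z i j k l := by
  simp only [Psi7Z, w4Z, w3Z]
  ring

def psiPsiDefect (i j k a b c : Fin 7) : ℤ :=
  ∑ l, Psi7Z i j k l * Psi7Z a b c l
    - (-(Pi7Z a j k * Pi7Z i b c) - Pi7Z i a k * Pi7Z j b c - Pi7Z i j a * Pi7Z k b c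
        + kdZ i a * kdZ j b * kdZ k c + kdZ i b * kdZ j c * kdZ k a + kdZ i c * kdZ j a * kdZ k b
        - kdZ i a * kdZ j c * kdZ k b - kdZ i b * kdZ j a * kdZ k c - kdZ i c * kdZ j b * kdZ k a
        - kdZ i a * Psi7Z j k b c - kdZ j a * Psi7Z k i b c - kdZ k a * Psi7Z i j b c
        + kdZ a b * Psi7Z i j k c - kdZ a c * Psi7Z i j k b)

theorem psiPsiDefect_swap₁₂ (i j k a b c : Fin 7) :
    psiPsiDefect j i k a b c = -psiPsiDefect i j k a b c := by
  simp only [psiPsiDefect, Psi7Z_swap₁₂ j i k, Psi7Z_swap₁₂ i k b, Psi7Z_swap₁₂ k j b,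
    Psi7Z_swap₁₂ j i b, Pi7Z_swap₁₂ a i k, Pi7Z_swap₁₂ j a k, Pi7Z_swap₁₂ j i a,
    neg_mul, Finset.sum_neg_distrib]
  ring

theorem psiPsiDefect_swap₂₃ (i j k a b c : Fin 7) :
    psiPsiDefect i k j a b c = -psiPsiDefect i j k a b c := by
  simp only [psiPsiDefect, Psi7Z_swap₂₃ i k j, Psi7Z_swap₁₂ k j b, Psi7Z_swap₁₂ j i b,
    Psi7Z_swap₁₂ i k b, Pi7Z_swap₂₃ a k j, Pi7Z_swap₂₃ i a j, Pi7Z_swap₂₃ i k a,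
    neg_mul, Finset.sum_neg_distrib]
  ring

theorem psiPsiDefect_swap₅₆ (i j k a b c : Fin 7) :
    psiPsiDefect i j k a c b = -psiPsiDefect i j k a b c := by
  simp only [psiPsiDefect, Psi7Z_swap₂₃ a c b, Psi7Z_swap₃₄ j k c b, Psi7Z_swap₃₄ k i c b,
    Psi7Z_swap₃₄ i j c b, Pi7Z_swap₂₃ i c b, Pi7Z_swap₂₃ j c b, Pi7Z_swap₂₃ k c b,
    mul_neg, Finset.sum_neg_distrib]
  ring

theorem psiPsiDefect_eq_zero_of_lt :
    ∀ i j k a b c : Fin 7, i < j → j < k → b < c → psiPsiDefect i j k a b c = 0 := by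
  decide +kernel

theorem psiPsiDefect_eq_zero (i j k a b c : Fin 7) : psiPsiDefect i j k a b c = 0 := by
  have hsorted : ∀ x y z, x < y → y < z → psiPsiDefect x y z a b c = 0 := fun x y z hxy hyz ↦
    eq_zero_of_antisymm_of_forall_lt (f := psiPsiDefect x y z a) (psiPsiDefect_swap₅₆ x y z a)
      (psiPsiDefect_eq_zero_of_lt x y z a · · hxy hyz) b c
  exact eq_zero_of_antisymm₃_of_forall_lt (f := (psiPsiDefect · · · a b c))
    (psiPsiDefect_swap₁₂ · · · a b c) (psiPsiDefect_swap₂₃ · · · a b c) hsorted i j k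

theorem stmt16 (i j k a b c : Fin 7) :
    ∑ l : Fin 7, ∑ d : Fin 7, Psi7 i j k l * Psi7 a b c d * kd l d
      = -(Pi7 a j k * Pi7 i b c) - Pi7 i a k * Pi7 j b c - Pi7 i j a * Pi7 k b c
        + kd i a * kd j b * kd k c + kd i b * kd j c * kd k a + kd i c * kd j a * kd k b
        - kd i a * kd j c * kd k b - kd i b * kd j a * kd k c - kd i c * kd j b * kd k a
        - kd i a * Psi7 j k b c - kd j a * Psi7 k i b c - kd k a * Psi7 i j b c
        + kd a b * Psi7 i j k c - kd a c * Psi7 i j k b := by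
  have hcontract : ∀ l, ∑ d, Psi7 i j k l * Psi7 a b c d * kd l d
      = Psi7 i j k l * Psi7 a b c l := fun l ↦ by simp [kd]
  have hdefect := congrArg (Int.cast : ℤ → ℝ) (psiPsiDefect_eq_zero i j k a b c)
  rw [Finset.sum_congr rfl fun l _ ↦ hcontract l, ← sub_eq_zero]
  simpa [psiPsiDefect, Pi7_eq_intCast, Psi7_eq_intCast, kd_eq_intCast] using hdefect
end
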